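/- Let X₁, …, Xₙ be i.i.d. real random variables with mean μ and second moment v² = E X₁² < ∞. For any y > 0, the truncated-mean estimator μ̂ = (1/n)∑ᵢ ψ_τ(Xᵢ) with τ = 2v²/y satisfies P(μ̂ − μ ≥ y) ≤ exp(−n y²/(4v²)). -/

import Mathlib

/-! Chernoff's method with the exponent `1/τ`. Markov's inequality bounds the tail by
`exp (-(n/τ)(y + m)) · E exp((1/τ) ∑ ψ_τ(Xᵢ))`, independence factors the expectation, and the
elementary inequality `exp (ψ₁ x) ≤ 1 + x + x²` bounds each factor by `exp (m/τ + v²/τ²)`.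
The exponent `n (v²/τ² - y/τ)` is minimised at `τ = 2v²/y`. -/

open MeasureTheory ProbabilityTheory Real

/-- Truncation operator ψ_τ(u) = sign(u)·min(|u|, τ). -/
noncomputable def psi (τ u : ℝ) : ℝ := Real.sign u * min |u| τ

lemma psi_eq_max_min {τ : ℝ} (hτ : 0 ≤ τ) (u : ℝ) : psi τ u = max (min u τ) (-τ) := by
  rcases lt_trichotomy u 0 with hu | rfl | hu
  · rw [psi, Real.sign_of_neg hu, abs_of_neg hu, neg_one_mul, min_eq_left (hu.le.trans hτ),
      ← max_neg_neg, neg_neg]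
  · simp [psi, hτ]
  · rw [psi, Real.sign_of_pos hu, abs_of_pos hu, one_mul,
      max_eq_left ((neg_nonpos.2 hτ).trans (le_min hu.le hτ))]

lemma continuous_psi {τ : ℝ} (hτ : 0 ≤ τ) : Continuous (psi τ) := by
  simp_rw [funext (psi_eq_max_min hτ)]
  fun_prop

lemma psi_le {τ : ℝ} (hτ : 0 ≤ τ) (u : ℝ) : psi τ u ≤ τ := by
  rw [psi_eq_max_min hτ]
  exact max_le (min_le_right _ _) (by linarith)

lemma psi_div {τ : ℝ} (hτ : 0 < τ) (u : ℝ) : psi τ u / τ = psi 1 (u / τ) := by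
  rw [psi_eq_max_min hτ.le, psi_eq_max_min zero_le_one, ← max_div_div_right hτ.le,
    ← min_div_div_right hτ.le, div_self hτ.ne', neg_div, div_self hτ.ne']

lemma exp_psi_one_le (x : ℝ) : exp (psi 1 x) ≤ 1 + x + x ^ 2 := by
  rw [psi_eq_max_min zero_le_one]
  rcases le_total x (-1) with hx | hx
  · rw [min_eq_left (by linarith), max_eq_right hx]
    nlinarith [exp_neg_one_lt_d9]
  rcases le_total 1 x with hx' | hx'
  · rw [min_eq_right hx', max_eq_left (by norm_num)]
    nlinarith [exp_one_lt_d9]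
  · rw [min_eq_left hx', max_eq_left hx]
    have := abs_exp_sub_one_sub_id_le (abs_le.2 ⟨hx, hx'⟩)
    linarith [(abs_le.1 this).2]

section MGF

variable {Ω : Type*} [MeasurableSpace Ω] {μ : Measure Ω}

lemma integrable_exp_inv_mul_psi [IsFiniteMeasure μ] {X : Ω → ℝ} (hX : AEMeasurable X μ)
    {τ : ℝ} (hτ : 0 < τ) : Integrable (fun ω => exp (τ⁻¹ * psi τ (X ω))) μ :=
  integrable_exp_mul_of_le _ τ (inv_nonneg.2 hτ.le)
    ((continuous_psi hτ.le).measurable.comp_aemeasurable hX)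
    (ae_of_all _ fun ω => psi_le hτ.le (X ω))

lemma mgf_psi_le [IsProbabilityMeasure μ] {X : Ω → ℝ} (hX : AEMeasurable X μ)
    (hX2 : Integrable (fun ω => X ω ^ 2) μ) {τ : ℝ} (hτ : 0 < τ) :
    mgf (fun ω => psi τ (X ω)) μ τ⁻¹
      ≤ exp ((∫ ω, X ω ∂μ) / τ + (∫ ω, X ω ^ 2 ∂μ) / τ ^ 2) := by
  have hX1 : Integrable X μ :=
    ((memLp_two_iff_integrable_sq hX.aestronglyMeasurable).2 hX2).integrable one_le_two
  have h_pointwise (ω : Ω) :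
      exp (τ⁻¹ * psi τ (X ω)) ≤ 1 + X ω / τ + X ω ^ 2 / τ ^ 2 := by
    rw [inv_mul_eq_div, psi_div hτ, ← div_pow]
    exact exp_psi_one_le _
  have h_lin : Integrable (fun ω => 1 + X ω / τ) μ := (integrable_const 1).add (hX1.div_const τ)
  have h_quad : Integrable (fun ω => 1 + X ω / τ + X ω ^ 2 / τ ^ 2) μ :=
    h_lin.add (hX2.div_const _)
  calc mgf (fun ω => psi τ (X ω)) μ τ⁻¹
      ≤ ∫ ω, (1 + X ω / τ + X ω ^ 2 / τ ^ 2) ∂μ :=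
        integral_mono (integrable_exp_inv_mul_psi hX hτ) h_quad h_pointwise
    _ = 1 + ((∫ ω, X ω ∂μ) / τ + (∫ ω, X ω ^ 2 ∂μ) / τ ^ 2) := by
      rw [integral_add h_lin (hX2.div_const _),
        integral_add (integrable_const 1) (hX1.div_const τ), integral_div, integral_div]
      simp only [integral_const, probReal_univ, smul_eq_mul, mul_one]
      ring
    _ ≤ _ := by linarith [add_one_le_exp ((∫ ω, X ω ∂μ) / τ + (∫ ω, X ω ^ 2 ∂μ) / τ ^ 2)]

lemma measure_sum_ge_le_of_iIndepFun_of_mgf_le {ι : Type*} {X : ι → Ω → ℝ}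
    (h_indep : iIndepFun X μ) (h_meas : ∀ i, Measurable (X i)) {s : Finset ι} {t c : ℝ}
    (ht : 0 ≤ t) (h_int : ∀ i ∈ s, Integrable (fun ω => exp (t * X i ω)) μ)
    (h_mgf : ∀ i ∈ s, mgf (X i) μ t ≤ exp c) (ε : ℝ) :
    μ.real {ω | ε ≤ ∑ i ∈ s, X i ω} ≤ exp (-t * ε + s.card * c) := by
  have := h_indep.isProbabilityMeasure
  have h_chernoff := measure_ge_le_exp_mul_mgf ε ht (h_indep.integrable_exp_mul_sum h_meas h_int)
  simp only [Finset.sum_apply] at h_chernoff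
  calc μ.real {ω | ε ≤ ∑ i ∈ s, X i ω}
      ≤ exp (-t * ε) * ∏ i ∈ s, mgf (X i) μ t := by rwa [← h_indep.mgf_sum h_meas]
    _ ≤ exp (-t * ε) * ∏ _i ∈ s, exp c := by
      gcongr with i hi
      exacts [fun i _ => mgf_nonneg, h_mgf i hi]
    _ = exp (-t * ε + s.card * c) := by
      rw [Finset.prod_const, ← exp_nat_mul, ← exp_add]

end MGF

theorem stmt4_general {Ω : Type*} [MeasurableSpace Ω] (μ : Measure Ω) [IsProbabilityMeasure μ]
    (n : ℕ) (X : Fin n → Ω → ℝ) (hmeas : ∀ i, Measurable (X i))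
    (hindep : iIndepFun X μ)
    (m v : ℝ) (hv : 0 < v)
    (hmean : ∀ i, ∫ ω, X i ω ∂μ = m) (hsec : ∀ i, ∫ ω, (X i ω) ^ 2 ∂μ = v ^ 2)
    (y : ℝ) (hy : 0 < y) :
    (μ {ω | y ≤ (n : ℝ)⁻¹ * ∑ i, psi (2 * v ^ 2 / y) (X i ω) - m}).toReal
      ≤ Real.exp (-(n * y ^ 2) / (4 * v ^ 2)) := by
  set τ := 2 * v ^ 2 / y
  have hτ : 0 < τ := by positivity
  have hX2 (i : Fin n) : Integrable (fun ω => X i ω ^ 2) μ :=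
    Integrable.of_integral_ne_zero (by rw [hsec i]; positivity)
  have hψ : Measurable (psi τ) := (continuous_psi hτ.le).measurable
  have h_tail := measure_sum_ge_le_of_iIndepFun_of_mgf_le (s := Finset.univ)
    (hindep.comp (fun _ => psi τ) fun _ => hψ) (fun i => hψ.comp (hmeas i)) (inv_nonneg.2 hτ.le)
    (fun i _ => integrable_exp_inv_mul_psi (hmeas i).aemeasurable hτ)
    (fun i _ => (hmean i ▸ hsec i ▸ mgf_psi_le (hmeas i).aemeasurable (hX2 i) hτ))
    (n * (y + m))
  have h_event : {ω | y ≤ (n : ℝ)⁻¹ * ∑ i, psi τ (X i ω) - m}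
      ⊆ {ω | n * (y + m) ≤ ∑ i, psi τ (X i ω)} := by
    intro ω hω
    rcases n.eq_zero_or_pos with rfl | hn
    · simp
    rwa [Set.mem_ofPred_eq, le_sub_iff_add_le, inv_mul_eq_div, le_div_iff₀' (by positivity)] at hω
  rw [← measureReal_def]
  refine (measureReal_mono h_event).trans (h_tail.trans_eq (congrArg exp ?_))
  simp only [Finset.card_univ, Fintype.card_fin, τ]
  field_simp
  ring

theorem stmt4 {Ω : Type*} [MeasurableSpace Ω] (μ : Measure Ω) [IsProbabilityMeasure μ]
    (n : ℕ) (hn : 0 < n) (X : Fin n → Ω → ℝ) (hmeas : ∀ i, Measurable (X i))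
    (hindep : iIndepFun X μ)
    (hident : ∀ i, IdentDistrib (X i) (X ⟨0, hn⟩) μ μ)
    (m v : ℝ) (hv : 0 < v)
    (hmean : ∀ i, ∫ ω, X i ω ∂μ = m) (hsec : ∀ i, ∫ ω, (X i ω) ^ 2 ∂μ = v ^ 2)
    (y : ℝ) (hy : 0 < y) :
    (μ {ω | y ≤ (n : ℝ)⁻¹ * ∑ i, psi (2 * v ^ 2 / y) (X i ω) - m}).toReal
      ≤ Real.exp (-(n * y ^ 2) / (4 * v ^ 2)) :=
  stmt4_general μ n X hmeas hindep m v hv hmean hsec y hy
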